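/- arXiv:2210.11102 — 2 statements merged into one kernel-verified Lean document; each statement's English description precedes it below -/
import Mathlib

section
/- If q is a positive semidefinite kernel on a set S that is continuous and bounded, then the embedding of the reproducing kernel Hilbert space H_q(D) into L^2(D) (for D ⊆ S bounded measurable) is Hilbert–Schmidt, with squared Hilbert–Schmidt norm equal to ∫_D q(x,x) dx. -/
open MeasureTheory
open scoped RealInnerProductSpace ENNReal

/-!
For every `x`, Parseval gives `‖K x‖² = ∑ⱼ ⟪eⱼ, K x⟫²`, while `‖ι eⱼ‖² = ∫ ⟪eⱼ, K x⟫² dx`.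
In `ℝ≥0∞` monotone convergence swaps the sum and the integral with no integrability hypothesis,
so `∑ⱼ ‖ι eⱼ‖² = ∫_D ‖K x‖² dx`; this is finite because the kernel is bounded on the bounded
set `D`, and then it can be read back in `ℝ`.
-/

lemma MeasureTheory.Lp.enorm_sq_eq_lintegral {X E : Type*} [MeasurableSpace X] {μ : Measure X}
    [NormedAddCommGroup E] (u : Lp E 2 μ) : ‖u‖ₑ ^ 2 = ∫⁻ x, ‖u x‖ₑ ^ 2 ∂μ := by
  simpa [Lp.enorm_def] using
    eLpNorm_nnreal_pow_eq_lintegral (f := u) (μ := μ) (p := 2) two_ne_zero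

lemma HilbertBasis.tsum_enorm_inner_sq {ι H : Type*} [NormedAddCommGroup H]
    [InnerProductSpace ℝ H] (b : HilbertBasis ι ℝ H) (v : H) : ∑' j, ‖⟪b j, v⟫‖ₑ ^ 2 = ‖v‖ₑ ^ 2 := by
  have h := b.hasSum_inner_mul_inner v v
  simp_rw [← real_inner_comm v, ← sq, real_inner_self_eq_norm_sq] at h
  simp_rw [← ofReal_norm, ← ENNReal.ofReal_pow (norm_nonneg _), Real.norm_eq_abs, sq_abs]
  exact (ENNReal.ofReal_tsum_of_nonneg (fun _ => sq_nonneg _) h.summable).symm.trans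
    (congrArg _ h.tsum_eq)

section

variable {X ι H : Type*} [MeasurableSpace X] {μ : Measure X}
  [NormedAddCommGroup H] [InnerProductSpace ℝ H] (b : HilbertBasis ι ℝ H)
  {K : X → H} {T : H → Lp ℝ 2 μ}

lemma aemeasurable_enorm_inner_sq_of_coeFn_ae_eq_inner
    (hT : ∀ j, (T (b j) : X → ℝ) =ᵐ[μ] fun x => ⟪b j, K x⟫) (j : ι) :
    AEMeasurable (fun x => ‖⟪b j, K x⟫‖ₑ ^ 2) μ :=
  ((Lp.aestronglyMeasurable (T (b j))).congr (hT j)).enorm.pow_const 2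

lemma aemeasurable_enorm_sq_of_coeFn_ae_eq_inner [Countable ι]
    (hT : ∀ j, (T (b j) : X → ℝ) =ᵐ[μ] fun x => ⟪b j, K x⟫) :
    AEMeasurable (fun x => ‖K x‖ₑ ^ 2) μ := by
  simp_rw [← b.tsum_enorm_inner_sq]
  exact AEMeasurable.tsum (aemeasurable_enorm_inner_sq_of_coeFn_ae_eq_inner b hT)

lemma tsum_enorm_sq_eq_lintegral_of_coeFn_ae_eq_inner [Countable ι]
    (hT : ∀ j, (T (b j) : X → ℝ) =ᵐ[μ] fun x => ⟪b j, K x⟫) :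
    ∑' j, ‖T (b j)‖ₑ ^ 2 = ∫⁻ x, ‖K x‖ₑ ^ 2 ∂μ := by
  calc ∑' j, ‖T (b j)‖ₑ ^ 2 = ∑' j, ∫⁻ x, ‖⟪b j, K x⟫‖ₑ ^ 2 ∂μ := by
        refine tsum_congr fun j => ?_
        rw [Lp.enorm_sq_eq_lintegral]
        exact lintegral_congr_ae ((hT j).fun_comp fun r => ‖r‖ₑ ^ 2)
    _ = ∫⁻ x, ∑' j, ‖⟪b j, K x⟫‖ₑ ^ 2 ∂μ :=
      (lintegral_tsum (aemeasurable_enorm_inner_sq_of_coeFn_ae_eq_inner b hT)).symm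
    _ = ∫⁻ x, ‖K x‖ₑ ^ 2 ∂μ := by simp_rw [b.tsum_enorm_inner_sq]

lemma hasSum_norm_sq_of_coeFn_ae_eq_inner [Countable ι]
    (hT : ∀ j, (T (b j) : X → ℝ) =ᵐ[μ] fun x => ⟪b j, K x⟫)
    (hK : ∫⁻ x, ‖K x‖ₑ ^ 2 ∂μ ≠ ∞) :
    HasSum (fun j => ‖T (b j)‖ ^ 2) (∫ x, ‖K x‖ ^ 2 ∂μ) := by
  rw [← tsum_enorm_sq_eq_lintegral_of_coeFn_ae_eq_inner b hT] at hK
  convert ENNReal.hasSum_toReal hK using 1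
  · simp
  · rw [← ENNReal.tsum_toReal_eq (fun j => by simp),
      tsum_enorm_sq_eq_lintegral_of_coeFn_ae_eq_inner b hT,
      ← integral_toReal (aemeasurable_enorm_sq_of_coeFn_ae_eq_inner b hT) (by simp)]
    simp

end

theorem stmt0_general {d : ℕ} (D : Set (EuclideanSpace ℝ (Fin d)))
    (hDb : Bornology.IsBounded D)
    {H : Type*} [NormedAddCommGroup H] [InnerProductSpace ℝ H]
    (K : EuclideanSpace ℝ (Fin d) → H)
    (hbdd : ∃ M : ℝ, ∀ x ∈ D, ∀ y ∈ D, |⟪K x, K y⟫| ≤ M)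
    (e : HilbertBasis ℕ ℝ H)
    (ι : H →L[ℝ] Lp ℝ 2 (volume.restrict D))
    (hι : ∀ f : H,
      (ι f : EuclideanSpace ℝ (Fin d) → ℝ) =ᵐ[volume.restrict D] fun x => ⟪f, K x⟫) :
    Summable (fun j => ‖ι (e j)‖ ^ 2) ∧
      ∑' j, ‖ι (e j)‖ ^ 2 = ∫ x in D, ⟪K x, K x⟫ := by
  obtain ⟨M, hM⟩ := hbdd
  have hfin : ∫⁻ x in D, ‖K x‖ₑ ^ 2 ≠ ∞ := by
    refine (setLIntegral_lt_top_of_le_nnreal hDb.measure_lt_top.ne ⟨M.toNNReal, fun x hx => ?_⟩).ne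
    rw [← ofReal_norm, ← ENNReal.ofReal_pow (norm_nonneg _), ← real_inner_self_eq_norm_sq]
    exact ENNReal.ofReal_le_ofReal ((le_abs_self _).trans (hM x hx x hx))
  have hsum := hasSum_norm_sq_of_coeFn_ae_eq_inner e (fun j => hι (e j)) hfin
  simp_rw [real_inner_self_eq_norm_sq]
  exact ⟨hsum.summable, hsum.tsum_eq⟩

/-- If `q(x,y) = ⟪K x, K y⟫` is a continuous, bounded, positive semidefinite
kernel on `S ⊇ D` (here represented through its kernel sections `K` into the RKHS `H`),
then the embedding `ι` of the RKHS into `L²(D)` is Hilbert–Schmidt, with squared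
Hilbert–Schmidt norm `∑' j, ‖ι (e j)‖²` equal to `∫_D q(x,x) dx`. -/
theorem stmt0 {d : ℕ} (D : Set (EuclideanSpace ℝ (Fin d)))
    (hDb : Bornology.IsBounded D) (hDm : MeasurableSet D)
    {H : Type*} [NormedAddCommGroup H] [InnerProductSpace ℝ H] [CompleteSpace H]
    (K : EuclideanSpace ℝ (Fin d) → H)
    (hcont : ContinuousOn
      (fun p : EuclideanSpace ℝ (Fin d) × EuclideanSpace ℝ (Fin d) => ⟪K p.1, K p.2⟫)
      (D ×ˢ D))
    (hbdd : ∃ M : ℝ, ∀ x ∈ D, ∀ y ∈ D, |⟪K x, K y⟫| ≤ M)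
    (e : HilbertBasis ℕ ℝ H)
    (ι : H →L[ℝ] Lp ℝ 2 (volume.restrict D))
    (hι : ∀ f : H,
      (ι f : EuclideanSpace ℝ (Fin d) → ℝ) =ᵐ[volume.restrict D] fun x => ⟪f, K x⟫) :
    Summable (fun j => ‖ι (e j)‖ ^ 2) ∧
      ∑' j, ‖ι (e j)‖ ^ 2 = ∫ x in D, ⟪K x, K x⟫ :=
  stmt0_general D hDb K hbdd e ι hι
end

section
/- Let D ⊂ ℝ^d be a bounded domain, q a bounded positive semidefinite kernel on D with separable RKHS H_q, and g : ℝ × D → ℝ Lipschitz in both variables: |g(x₁,y₁) − g(x₂,y₂)| ≤ C(|x₁−x₂| + |y₁−y₂|). Define (G(u)v)(x) := g(u(x),x)v(x). Then G(u) ∈ L₂(H_q, L²(D)) for every u ∈ L²(D), and ‖G(u) − G(v)‖_{L₂(H_q, L²(D))} ≤ C' ‖u − v‖_{L²(D)} with C' = C (sup_{x∈D} q(x,x))^{1/2}. -/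
/-
Since `Σ_j e_j(x)² = q(x,x) ≤ sup_D q`, summing finitely many `j` at a time gives
`Σ_j ∫_D (f e_j)² ≤ (sup_D q) ∫_D f²` for every `f ∈ L²(D)`. This is applied to
`f = g(u(·),·)`, which is square integrable because `g` grows at most linearly in its first
variable uniformly on the bounded set `D`, and to `f = g(u(·),·) − g(v(·),·)`, which is
pointwise bounded by `C |u − v|`.
-/

open MeasureTheory Set

section L2Estimates

variable {α : Type*} [MeasurableSpace α] {μ : Measure α} {φ : ℕ → α → ℝ} {Q : ℝ} {f : α → ℝ}
  {D : Set α} {g : ℝ → α → ℝ} {C : ℝ}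

lemma sum_integral_mul_sq_le (hφ : ∀ j, AEStronglyMeasurable (φ j) μ)
    (hφQ : ∀ᵐ x ∂μ, Summable (fun j => φ j x ^ 2) ∧ ∑' j, φ j x ^ 2 ≤ Q)
    (hf : MemLp f 2 μ) (s : Finset ℕ) :
    ∑ j ∈ s, ∫ x, (f x * φ j x) ^ 2 ∂μ ≤ Q * ∫ x, f x ^ 2 ∂μ := by
  have hpartial : ∀ᵐ x ∂μ, ∀ t : Finset ℕ, ∑ j ∈ t, φ j x ^ 2 ≤ Q := by
    filter_upwards [hφQ] with x ⟨hsum, hle⟩ t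
    exact (hsum.sum_le_tsum t fun j _ => sq_nonneg _).trans hle
  have hint : ∀ j, Integrable (fun x => (f x * φ j x) ^ 2) μ := by
    refine fun j => (hf.integrable_sq.const_mul Q).mono' ((hf.1.mul (hφ j)).pow 2) ?_
    filter_upwards [hpartial] with x hx
    rw [Real.norm_of_nonneg (sq_nonneg _), mul_pow, mul_comm Q]
    gcongr
    simpa using hx {j}
  rw [← integral_finsetSum s fun j _ => hint j, ← integral_const_mul]
  refine integral_mono_ae (integrable_finsetSum s fun j _ => hint j)
    (hf.integrable_sq.const_mul Q) ?_
  filter_upwards [hpartial] with x hx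
  simp only [mul_pow, ← Finset.mul_sum]
  rw [mul_comm Q]
  exact mul_le_mul_of_nonneg_left (hx s) (sq_nonneg _)

lemma summable_integral_mul_sq (hφ : ∀ j, AEStronglyMeasurable (φ j) μ)
    (hφQ : ∀ᵐ x ∂μ, Summable (fun j => φ j x ^ 2) ∧ ∑' j, φ j x ^ 2 ≤ Q)
    (hf : MemLp f 2 μ) :
    Summable fun j => ∫ x, (f x * φ j x) ^ 2 ∂μ :=
  summable_of_sum_le (fun _ => integral_nonneg fun _ => sq_nonneg _)
    (sum_integral_mul_sq_le hφ hφQ hf)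

lemma tsum_integral_mul_sq_le (hφ : ∀ j, AEStronglyMeasurable (φ j) μ)
    (hφQ : ∀ᵐ x ∂μ, Summable (fun j => φ j x ^ 2) ∧ ∑' j, φ j x ^ 2 ≤ Q)
    (hf : MemLp f 2 μ) :
    ∑' j, ∫ x, (f x * φ j x) ^ 2 ∂μ ≤ Q * ∫ x, f x ^ 2 ∂μ :=
  (summable_integral_mul_sq hφ hφQ hf).tsum_le_of_sum_le (sum_integral_mul_sq_le hφ hφQ hf)

lemma integral_sq_sub_superposition_le (hDm : MeasurableSet D)
    (hg : ∀ x₁ x₂ : ℝ, ∀ y ∈ D, |g x₁ y - g x₂ y| ≤ C * |x₁ - x₂|)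
    {u v : α → ℝ} (huv : MemLp (u - v) 2 (μ.restrict D)) :
    ∫ x in D, (g (u x) x - g (v x) x) ^ 2 ∂μ ≤ C ^ 2 * ∫ x in D, (u x - v x) ^ 2 ∂μ := by
  rw [← integral_const_mul]
  refine integral_mono_of_nonneg (ae_of_all _ fun _ => sq_nonneg _)
    (huv.integrable_sq.const_mul _) ?_
  filter_upwards [ae_restrict_mem hDm] with x hx
  calc (g (u x) x - g (v x) x) ^ 2 = |g (u x) x - g (v x) x| ^ 2 := (sq_abs _).symm
    _ ≤ (C * |u x - v x|) ^ 2 := pow_le_pow_left₀ (abs_nonneg _) (hg _ _ x hx) 2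
    _ = C ^ 2 * (u x - v x) ^ 2 := by rw [mul_pow, sq_abs]

end L2Estimates

section Superposition

variable {β : Type*} [NormedAddCommGroup β] {D : Set β} {g : ℝ → β → ℝ} {C : ℝ}

lemma lipschitzOnWith_uncurry (hC : 0 ≤ C)
    (hg : ∀ x₁ x₂ : ℝ, ∀ y₁ ∈ D, ∀ y₂ ∈ D, |g x₁ y₁ - g x₂ y₂| ≤ C * (|x₁ - x₂| + ‖y₁ - y₂‖)) :
    LipschitzOnWith (2 * C).toNNReal (fun p : ℝ × β => g p.1 p.2) (univ ×ˢ D) := by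
  refine LipschitzOnWith.of_dist_le' ?_
  rintro ⟨s, y⟩ ⟨-, hy⟩ ⟨t, z⟩ ⟨-, hz⟩
  have hs : |s - t| ≤ dist (s, y) (t, z) := le_max_left _ _
  have hyz : ‖y - z‖ ≤ dist (s, y) (t, z) := dist_eq_norm y z ▸ le_max_right _ _
  calc |g s y - g t z| ≤ C * (|s - t| + ‖y - z‖) := hg s t y hy z hz
    _ ≤ C * (dist (s, y) (t, z) + dist (s, y) (t, z)) := by gcongr
    _ = 2 * C * dist (s, y) (t, z) := by ring

lemma abs_le_add_mul_abs_of_subset_closedBall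
    (hg : ∀ x₁ x₂ : ℝ, ∀ y₁ ∈ D, ∀ y₂ ∈ D, |g x₁ y₁ - g x₂ y₂| ≤ C * (|x₁ - x₂| + ‖y₁ - y₂‖))
    (hC : 0 ≤ C) {x₀ : β} {r : ℝ} (hx₀ : x₀ ∈ D) (hr : D ⊆ Metric.closedBall x₀ r)
    (s : ℝ) {x : β} (hx : x ∈ D) :
    |g s x| ≤ |g 0 x₀| + C * r + C * |s| := by
  have hxr : C * ‖x - x₀‖ ≤ C * r := by gcongr; exact mem_closedBall_iff_norm.mp (hr hx)
  have hlip := hg s 0 x hx x₀ hx₀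
  rw [sub_zero] at hlip
  linarith [abs_sub_abs_le_abs_sub (g s x) (g 0 x₀)]

variable [MeasurableSpace β] [BorelSpace β] [SecondCountableTopology β]
  {μ : Measure β}

lemma aestronglyMeasurable_superposition (hDm : MeasurableSet D) (hC : 0 ≤ C)
    (hg : ∀ x₁ x₂ : ℝ, ∀ y₁ ∈ D, ∀ y₂ ∈ D, |g x₁ y₁ - g x₂ y₂| ≤ C * (|x₁ - x₂| + ‖y₁ - y₂‖))
    {w : β → ℝ} (hw : AEStronglyMeasurable w (μ.restrict D)) :
    AEStronglyMeasurable (fun x => g (w x) x) (μ.restrict D) := by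
  -- A Lipschitz extension of `g` off `ℝ × D` is continuous, hence composes measurably.
  obtain ⟨G, hG, hGg⟩ := (lipschitzOnWith_uncurry hC hg).extend_real
  refine (hG.continuous.comp_aestronglyMeasurable (hw.prodMk aestronglyMeasurable_id)).congr ?_
  filter_upwards [ae_restrict_mem hDm] with x hx
  exact (hGg ⟨mem_univ _, hx⟩).symm

lemma memLp_superposition (hDm : MeasurableSet D) (hDb : Bornology.IsBounded D)
    (hμD : μ D ≠ ⊤) (hC : 0 ≤ C)
    (hg : ∀ x₁ x₂ : ℝ, ∀ y₁ ∈ D, ∀ y₂ ∈ D, |g x₁ y₁ - g x₂ y₂| ≤ C * (|x₁ - x₂| + ‖y₁ - y₂‖))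
    {w : β → ℝ} (hw : MemLp w 2 (μ.restrict D)) :
    MemLp (fun x => g (w x) x) 2 (μ.restrict D) := by
  rcases D.eq_empty_or_nonempty with rfl | ⟨x₀, hx₀⟩
  · simp
  obtain ⟨r, hr⟩ := hDb.subset_closedBall x₀
  have : IsFiniteMeasure (μ.restrict D) := isFiniteMeasure_restrict.mpr hμD
  have hbound := (memLp_const (|g 0 x₀| + C * r)).add (hw.norm.const_mul C)
  refine hbound.of_le (aestronglyMeasurable_superposition hDm hC hg hw.1) ?_
  filter_upwards [ae_restrict_mem hDm] with x hx
  simp only [Pi.add_apply, Real.norm_eq_abs]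
  exact (abs_le_add_mul_abs_of_subset_closedBall hg hC hx₀ hr (w x) hx).trans (le_abs_self _)

end Superposition

theorem stmt19_general {dim : ℕ} (D : Set (EuclideanSpace ℝ (Fin dim)))
    (hDb : Bornology.IsBounded D) (hDm : MeasurableSet D)
    {Hq : Type*} [NormedAddCommGroup Hq] [InnerProductSpace ℝ Hq]
    (e : HilbertBasis ℕ ℝ Hq)
    (ev : Hq →ₗ[ℝ] (EuclideanSpace ℝ (Fin dim) → ℝ))
    (hev : ∀ j, Measurable (ev (e j)))
    (q : EuclideanSpace ℝ (Fin dim) → EuclideanSpace ℝ (Fin dim) → ℝ)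
    (hker : ∀ x ∈ D, (Summable fun j : ℕ => ev (e j) x ^ 2) ∧
      ∑' j : ℕ, ev (e j) x ^ 2 = q x x)
    (hQbdd : BddAbove ((fun x => q x x) '' D))
    (g : ℝ → EuclideanSpace ℝ (Fin dim) → ℝ) (C : ℝ) (hC : 0 ≤ C)
    (hg : ∀ x₁ x₂ : ℝ, ∀ y₁ ∈ D, ∀ y₂ ∈ D,
      |g x₁ y₁ - g x₂ y₂| ≤ C * (|x₁ - x₂| + ‖y₁ - y₂‖))
    (u v : EuclideanSpace ℝ (Fin dim) → ℝ)
    (hu : MemLp u 2 (volume.restrict D)) (hv : MemLp v 2 (volume.restrict D)) :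
    Summable (fun j : ℕ => ∫ x in D, (g (u x) x * ev (e j) x) ^ 2) ∧
      Real.sqrt (∑' j : ℕ, ∫ x in D, ((g (u x) x - g (v x) x) * ev (e j) x) ^ 2)
        ≤ C * Real.sqrt (sSup ((fun x => q x x) '' D)) *
          Real.sqrt (∫ x in D, (u x - v x) ^ 2) := by
  set Q := sSup ((fun x => q x x) '' D)
  have hφ j : AEStronglyMeasurable (ev (e j)) (volume.restrict D) := (hev j).aestronglyMeasurable
  have hφQ : ∀ᵐ x ∂volume.restrict D,
      Summable (fun j => ev (e j) x ^ 2) ∧ ∑' j, ev (e j) x ^ 2 ≤ Q :=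
    ae_restrict_of_forall_mem hDm fun x hx =>
      ⟨(hker x hx).1, (hker x hx).2.trans_le (le_csSup hQbdd ⟨x, hx, rfl⟩)⟩
  have hG {w} (hw : MemLp w 2 (volume.restrict D)) :
      MemLp (fun x => g (w x) x) 2 (volume.restrict D) :=
    memLp_superposition hDm hDb hDb.measure_lt_top.ne hC hg hw
  refine ⟨summable_integral_mul_sq hφ hφQ (hG hu), ?_⟩
  have hQ0 : 0 ≤ Q := Real.sSup_nonneg <| by
    rintro _ ⟨x, hx, rfl⟩
    exact (tsum_nonneg fun j => sq_nonneg (ev (e j) x)).trans (hker x hx).2.le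
  have hHS : ∑' j, ∫ x in D, ((g (u x) x - g (v x) x) * ev (e j) x) ^ 2
      ≤ Q * ∫ x in D, (g (u x) x - g (v x) x) ^ 2 :=
    tsum_integral_mul_sq_le hφ hφQ ((hG hu).sub (hG hv))
  have hL2 := integral_sq_sub_superposition_le hDm
    (fun s t y hy => by simpa using hg s t y hy y hy) (hu.sub hv)
  calc √(∑' j, ∫ x in D, ((g (u x) x - g (v x) x) * ev (e j) x) ^ 2)
      ≤ √(Q * (C ^ 2 * ∫ x in D, (u x - v x) ^ 2)) :=
        Real.sqrt_le_sqrt (hHS.trans (mul_le_mul_of_nonneg_left hL2 hQ0))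
    _ = C * √Q * √(∫ x in D, (u x - v x) ^ 2) := by
        rw [Real.sqrt_mul hQ0, Real.sqrt_mul (sq_nonneg C), Real.sqrt_sq hC]; ring

/-- Let `D ⊂ ℝ^dim` be a bounded domain, `q` a bounded positive
semidefinite kernel on `D` with separable RKHS `H_q` (with orthonormal basis `(e_j)`,
function values given by `ev`, and the pointwise identity `Σ_j e_j(x)² = q(x,x)`), and
`g : ℝ × D → ℝ` Lipschitz in both variables:
`|g(x₁,y₁) − g(x₂,y₂)| ≤ C(|x₁−x₂| + |y₁−y₂|)`. Define `(G(u)v)(x) := g(u(x),x)v(x)`.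
Then `G(u)` is Hilbert–Schmidt from `H_q` to `L²(D)` for every `u ∈ L²(D)` (its squared
Hilbert–Schmidt norm being `Σ_j ∫_D (g(u(x),x) e_j(x))² dx`, which is summable), and
`‖G(u) − G(v)‖_{L₂(H_q,L²(D))} ≤ C' ‖u − v‖_{L²(D)}` with
`C' = C (sup_{x∈D} q(x,x))^{1/2}`. -/
theorem stmt19 {dim : ℕ} (D : Set (EuclideanSpace ℝ (Fin dim)))
    (hDb : Bornology.IsBounded D) (hDm : MeasurableSet D)
    {Hq : Type*} [NormedAddCommGroup Hq] [InnerProductSpace ℝ Hq] [CompleteSpace Hq]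
    (e : HilbertBasis ℕ ℝ Hq)
    (ev : Hq →ₗ[ℝ] (EuclideanSpace ℝ (Fin dim) → ℝ))
    (hev : ∀ j, Measurable (ev (e j)))
    (q : EuclideanSpace ℝ (Fin dim) → EuclideanSpace ℝ (Fin dim) → ℝ)
    (hker : ∀ x ∈ D, (Summable fun j : ℕ => ev (e j) x ^ 2) ∧
      ∑' j : ℕ, ev (e j) x ^ 2 = q x x)
    (hQbdd : BddAbove ((fun x => q x x) '' D))
    (g : ℝ → EuclideanSpace ℝ (Fin dim) → ℝ) (C : ℝ) (hC : 0 ≤ C)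
    (hg : ∀ x₁ x₂ : ℝ, ∀ y₁ ∈ D, ∀ y₂ ∈ D,
      |g x₁ y₁ - g x₂ y₂| ≤ C * (|x₁ - x₂| + ‖y₁ - y₂‖))
    (u v : EuclideanSpace ℝ (Fin dim) → ℝ)
    (hu : MemLp u 2 (volume.restrict D)) (hv : MemLp v 2 (volume.restrict D)) :
    Summable (fun j : ℕ => ∫ x in D, (g (u x) x * ev (e j) x) ^ 2) ∧
      Real.sqrt (∑' j : ℕ, ∫ x in D, ((g (u x) x - g (v x) x) * ev (e j) x) ^ 2)
        ≤ C * Real.sqrt (sSup ((fun x => q x x) '' D)) *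
          Real.sqrt (∫ x in D, (u x - v x) ^ 2) :=
  stmt19_general D hDb hDm e ev hev q hker hQbdd g C hC hg u v hu hv
end
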